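/- arXiv:2005.05285 — 8 statements merged into one kernel-verified Lean document; each statement's English description precedes it below -/
import Mathlib

section
/- Let q be an odd prime power, n ≥ 1, and α a nonzero element of F_{q^n} that is not contained in any proper subfield of F_{q^n}. If A(X) ∈ F_q[X] is the minimal polynomial of α over F_q, then the polynomial B(X) := A(X^2) is irreducible over F_q if and only if α is a non-square in F_{q^n}. -/
open Polynomial IntermediateField

theorem stmt_0 (F E : Type*) [Field F] [Fintype F] [Field E] [Fintype E] [Algebra F E]
    (hq : Odd (Fintype.card F)) (n : ℕ) (hn : 1 ≤ n) (hrank : Module.finrank F E = n)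
    (α : E) (hα : α ≠ 0)
    (hproper : ∀ K : IntermediateField F E, α ∈ K → K = ⊤) :
    Irreducible ((minpoly F α).comp (X ^ 2)) ↔ ¬ IsSquare α := by
  have hFD : FiniteDimensional F E := FiniteDimensional.of_finrank_pos (by omega)
  have hint : IsIntegral F α := .of_finite F α
  have htop : F⟮α⟯ = ⊤ := hproper _ (IntermediateField.mem_adjoin_simple_self F α)
  have hdeg : (minpoly F α).natDegree = n := by
    rw [← IntermediateField.adjoin.finrank hint, htop, IntermediateField.finrank_top', hrank]
  have hAmonic : (minpoly F α).Monic := minpoly.monic hint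
  have hBmonic : ((minpoly F α).comp (X ^ 2)).Monic :=
    hAmonic.comp (monic_X_pow 2) (by simp)
  have hBdeg : ((minpoly F α).comp (X ^ 2)).natDegree = 2 * n := by
    rw [natDegree_comp, hdeg, natDegree_X_pow]; ring
  constructor
  · intro hirr hsq
    obtain ⟨β, hβ⟩ := hsq
    have hroot : aeval β ((minpoly F α).comp (X ^ 2)) = 0 := by
      rw [aeval_comp]
      simp only [map_pow, aeval_X]
      rw [sq, ← hβ, minpoly.aeval]
    have heq := minpoly.eq_of_irreducible_of_monic hirr hroot hBmonic
    have hle : (minpoly F β).natDegree ≤ Module.finrank F E := minpoly.natDegree_le β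
    rw [← heq, hBdeg, hrank] at hle
    omega
  · intro hns
    have hfirr : Irreducible (X ^ 2 - C α : E[X]) :=
      X_pow_sub_C_irreducible_of_prime Nat.prime_two
        (fun b hb => hns ⟨b, by rw [← hb]; ring⟩)
    haveI : Fact (Irreducible (X ^ 2 - C α : E[X])) := ⟨hfirr⟩
    set f : E[X] := X ^ 2 - C α with hf
    have hf0 : f ≠ 0 := hfirr.ne_zero
    set E' := AdjoinRoot f with hE'
    set β : E' := AdjoinRoot.root f with hβdef
    have hβ2 : β ^ 2 = algebraMap E E' α := by
      have h := AdjoinRoot.eval₂_root f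
      rw [hf] at h
      simp only [eval₂_sub, eval₂_pow, eval₂_X, eval₂_C] at h
      rw [sub_eq_zero] at h
      exact h
    haveI : FiniteDimensional E E' :=
      Module.Finite.of_basis (AdjoinRoot.powerBasis hf0).basis
    have hfr2 : Module.finrank E E' = 2 := by
      rw [(AdjoinRoot.powerBasis hf0).finrank, AdjoinRoot.powerBasis_dim, hf,
        natDegree_X_pow_sub_C]
    haveI : FiniteDimensional F E' := FiniteDimensional.trans F E E'
    have hintβ : IsIntegral F β := .of_finite F β
    -- every element of the image of E lies in F⟮β⟯
    have hEβ : ∀ e : E, algebraMap E E' e ∈ F⟮β⟯ := by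
      intro e
      have he : e ∈ F⟮α⟯ := htop ▸ IntermediateField.mem_top
      have he' : e ∈ Algebra.adjoin F ({α} : Set E) := by
        rw [← IntermediateField.adjoin_simple_toSubalgebra_of_isAlgebraic hint.isAlgebraic] at *
        exact he
      rw [Algebra.adjoin_singleton_eq_range_aeval] at he'
      obtain ⟨p, hp⟩ := he'
      have hb2 : β ^ 2 ∈ F⟮β⟯ := pow_mem (IntermediateField.mem_adjoin_simple_self F β) 2
      have hmem : aeval (β ^ 2) p ∈ Algebra.adjoin F ({β ^ 2} : Set E') := by
        rw [Algebra.adjoin_singleton_eq_range_aeval]; exact ⟨p, rfl⟩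
      have hle : Algebra.adjoin F ({β ^ 2} : Set E') ≤ F⟮β⟯.toSubalgebra :=
        Algebra.adjoin_le (Set.singleton_subset_iff.2 hb2)
      have : algebraMap E E' e = aeval (β ^ 2) p := by
        rw [hβ2, aeval_algebraMap_apply]
        exact congrArg _ hp.symm
      rw [this]
      exact hle hmem
    have hβtop : F⟮β⟯ = ⊤ := by
      rw [eq_top_iff]
      rintro x -
      have hx : x ∈ Algebra.adjoin E ({β} : Set E') := by
        rw [hβdef, AdjoinRoot.adjoinRoot_eq_top]; trivial
      induction hx using Algebra.adjoin_induction with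
      | mem y hy =>
        rw [Set.mem_singleton_iff] at hy
        rw [hy]
        exact IntermediateField.mem_adjoin_simple_self F β
      | algebraMap e => exact hEβ e
      | add _ _ _ _ h1 h2 => exact add_mem h1 h2
      | mul _ _ _ _ h1 h2 => exact mul_mem h1 h2
    have hβdeg : (minpoly F β).natDegree = 2 * n := by
      rw [← IntermediateField.adjoin.finrank hintβ, hβtop, IntermediateField.finrank_top',
        ← Module.finrank_mul_finrank F E E', hrank, hfr2]
      ring
    have hroot : aeval β ((minpoly F α).comp (X ^ 2)) = 0 := by
      rw [aeval_comp]
      simp only [map_pow, aeval_X]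
      rw [hβ2, aeval_algebraMap_apply, minpoly.aeval, map_zero]
    have hdvd : minpoly F β ∣ (minpoly F α).comp (X ^ 2) := minpoly.dvd F β hroot
    have heq : (minpoly F α).comp (X ^ 2) = minpoly F β :=
      eq_of_monic_of_dvd_of_natDegree_le (minpoly.monic hintβ) hBmonic hdvd
        (by rw [hBdeg, hβdeg])
    rw [heq]
    exact minpoly.irreducible hintβ
end

section
/- Let q be an odd prime power, n ≥ 1, and α a nonzero proper element of F_{q^n} with minimal polynomial A(X) ∈ F_q[X] over F_q. Then A(X^2) is irreducible over F_q if and only if (-1)^n · A(0) is a non-square in F_q. -/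
open Polynomial

-- Auxiliary: the (-1)^n * coeff 0 of the minpoly, mapped to E, equals α ^ (∑ i < n, q^i),
-- and squareness transfers.
lemma aux_isSquare_norm_iff (F E : Type*) [Field F] [Fintype F] [Field E] [Fintype E] [Algebra F E]
    (hq : Odd (Fintype.card F)) (n : ℕ) (hn : 1 ≤ n) (hrank : Module.finrank F E = n)
    (α : E) (hα : α ≠ 0) (htop : IntermediateField.adjoin F {α} = ⊤) :
    (IsSquare ((-1 : F) ^ n * (minpoly F α).coeff 0) ↔ IsSquare α) := by
  classical
  haveI : FiniteDimensional F E := Module.Finite.of_finite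
  have hint : IsIntegral F α := IsIntegral.of_finite F α
  set q := Fintype.card F with hqdef
  have hq1 : 1 < q := Fintype.one_lt_card
  have hcardE : Fintype.card E = q ^ n := by
    rw [Module.card_eq_pow_finrank (K := F) (V := E), hrank]
  have hF2 : ringChar F ≠ 2 := by
    intro h
    have := FiniteField.even_card_of_char_two h
    obtain ⟨t, ht⟩ := hq
    omega
  have hqEodd : Odd (Fintype.card E) := by rw [hcardE]; exact hq.pow
  have hE2 : ringChar E ≠ 2 := by
    intro h
    have := FiniteField.even_card_of_char_two h
    obtain ⟨t, ht⟩ := hqEodd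
    omega
  -- power basis and norm
  let pb : PowerBasis F E :=
    (IntermediateField.adjoin.powerBasis hint).map
      ((IntermediateField.equivOfEq htop).trans IntermediateField.topEquiv)
  have hgen : pb.gen = α := rfl
  have hdim : pb.dim = n := by
    have := pb.finrank
    omega
  have hnorm : Algebra.norm F α = (-1 : F) ^ n * (minpoly F α).coeff 0 := by
    have h1 := Algebra.PowerBasis.norm_gen_eq_coeff_zero_minpoly pb
    rwa [hgen, hdim] at h1
  -- Frobenius automorphism
  obtain ⟨p, _instp⟩ := CharP.exists F
  haveI : CharP F p := _instp
  haveI : CharP E p := charP_of_injective_algebraMap (algebraMap F E).injective p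
  obtain ⟨k, hp, hqpk⟩ := FiniteField.card F p
  haveI := Fact.mk hp
  let fr : E →ₐ[F] E :=
    { toRingHom := iterateFrobenius E p k
      commutes' := fun c => by
        show iterateFrobenius E p k (algebraMap F E c) = algebraMap F E c
        rw [iterateFrobenius_def, ← map_pow, ← hqpk, FiniteField.pow_card] }
  have hfrinj : Function.Injective fr := fr.toRingHom.injective
  let φ : E ≃ₐ[F] E := AlgEquiv.ofBijective fr (Finite.injective_iff_bijective.mp hfrinj)
  have hφ : ∀ x : E, φ x = x ^ q := fun x => by
    show iterateFrobenius E p k x = x ^ q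
    rw [iterateFrobenius_def, hqdef, hqpk]
  have hφpow : ∀ (i : ℕ) (x : E), (φ ^ i) x = x ^ q ^ i := by
    intro i
    induction i with
    | zero => intro x; simp
    | succ i ih =>
      intro x
      rw [pow_succ', AlgEquiv.mul_apply, ih, hφ, ← pow_mul, pow_succ]
  -- the automorphism group
  have hcardGal : Fintype.card (E ≃ₐ[F] E) = n := by
    rw [← Nat.card_eq_fintype_card, IsGalois.card_aut_eq_finrank, hrank]
  obtain ⟨g, hg⟩ := IsCyclic.exists_generator (α := Eˣ)
  have horder : orderOf g = q ^ n - 1 := by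
    rw [orderOf_eq_card_of_forall_mem_zpowers hg, Nat.card_eq_fintype_card, Fintype.card_units, hcardE]
  have hinj : Function.Injective (fun i : Fin n => φ ^ (i : ℕ)) := by
    have key : ∀ i j : Fin n, (i : ℕ) ≤ (j : ℕ) → φ ^ (i : ℕ) = φ ^ (j : ℕ) → i = j := by
      intro i j hij h
      by_contra hne
      have hlt : (i : ℕ) < (j : ℕ) := lt_of_le_of_ne hij (fun hc => hne (Fin.ext hc))
      have hx : (g : E) ^ q ^ (i : ℕ) = (g : E) ^ q ^ (j : ℕ) := by
        rw [← hφpow, ← hφpow, h]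
      have hu : g ^ q ^ (i : ℕ) = g ^ q ^ (j : ℕ) := Units.ext (by rw [Units.val_pow_eq_pow_val, Units.val_pow_eq_pow_val]; exact hx)
      have hmod := (pow_eq_pow_iff_modEq.mp hu)
      have hdvd : (q ^ n - 1) ∣ q ^ (j : ℕ) - q ^ (i : ℕ) := by
        rw [horder] at hmod
        exact (Nat.modEq_iff_dvd' (Nat.pow_le_pow_right (le_of_lt hq1) hij)).mp hmod
      have h1 : q ^ (i : ℕ) < q ^ (j : ℕ) := Nat.pow_lt_pow_right hq1 hlt
      have h2 : q ^ (j : ℕ) ≤ q ^ (n - 1) := Nat.pow_le_pow_right (le_of_lt hq1) (by omega)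
      have h3 : q ^ (n - 1) < q ^ n := Nat.pow_lt_pow_right hq1 (by omega)
      have h4 : 1 ≤ q ^ (i : ℕ) := Nat.one_le_pow _ _ (by omega)
      have := Nat.le_of_dvd (by omega) hdvd
      omega
    intro i j h
    rcases le_total (i : ℕ) (j : ℕ) with hij | hij
    · exact key i j hij h
    · exact (key j i hij h.symm).symm
  have hbij : Function.Bijective (fun i : Fin n => φ ^ (i : ℕ)) := by
    rw [Fintype.bijective_iff_injective_and_card]
    exact ⟨hinj, by simp [hcardGal]⟩
  set e : ℕ := ∑ i ∈ Finset.range n, q ^ i with hedef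
  have hmapnorm : algebraMap F E ((-1 : F) ^ n * (minpoly F α).coeff 0) = α ^ e := by
    rw [← hnorm, Algebra.norm_eq_prod_automorphisms]
    rw [← Fintype.prod_bijective _ hbij (fun i : Fin n => α ^ q ^ (i : ℕ)) (fun σ => σ α)
      (fun i => (hφpow i α).symm)]
    rw [Finset.prod_pow_eq_pow_sum]
    congr 1
    exact Fin.sum_univ_eq_sum_range _ n
  -- arithmetic
  obtain ⟨t, ht⟩ := hq
  obtain ⟨s, hs⟩ := hqEodd
  rw [hcardE] at hs
  have hgeomZ : (∑ i ∈ Finset.range n, (q : ℤ) ^ i) * ((q : ℤ) - 1) = (q : ℤ) ^ n - 1 :=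
    geom_sum_mul (q : ℤ) n
  have hcast : ((e : ℤ)) = ∑ i ∈ Finset.range n, (q : ℤ) ^ i := by push_cast [hedef]; ring
  have hgeom : e * (q - 1) = q ^ n - 1 := by
    have h1 : ((e * (q - 1) : ℕ) : ℤ) = ((q ^ n - 1 : ℕ) : ℤ) := by
      push_cast [Nat.cast_sub (le_of_lt hq1), Nat.cast_sub (Nat.one_le_pow n q (by omega))]
      rw [hcast] at *
      linarith [hgeomZ]
    exact_mod_cast h1
  have harith : e * (q / 2) = q ^ n / 2 := by
    have hq2 : q / 2 = t := by omega
    have hqn2 : q ^ n / 2 = s := by omega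
    have h2 : e * (q - 1) = e * (2 * t) := by rw [show q - 1 = 2 * t by omega]
    have h3 : e * (2 * t) = 2 * (e * t) := by ring
    have : 2 * (e * t) = q ^ n - 1 := by rw [← h3, ← h2, hgeom]
    have het : e * t = s := by omega
    rw [hq2, hqn2, het]
  -- conclude
  have hc0 : (-1 : F) ^ n * (minpoly F α).coeff 0 ≠ 0 := by
    apply mul_ne_zero
    · exact pow_ne_zero _ (by norm_num)
    · exact minpoly.coeff_zero_ne_zero hint hα
  rw [FiniteField.isSquare_iff hF2 hc0, FiniteField.isSquare_iff hE2 hα]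
  have hkey : algebraMap F E (((-1 : F) ^ n * (minpoly F α).coeff 0) ^ (q / 2))
      = α ^ (Fintype.card E / 2) := by
    rw [map_pow, hmapnorm, ← pow_mul, harith, hcardE]
  constructor
  · intro h
    rw [← hkey, h, map_one]
  · intro h
    apply (algebraMap F E).injective
    rw [hkey, h, map_one]

theorem stmt_1 (F E : Type*) [Field F] [Fintype F] [Field E] [Fintype E] [Algebra F E]
    (hq : Odd (Fintype.card F)) (n : ℕ) (hn : 1 ≤ n) (hrank : Module.finrank F E = n)
    (α : E) (hα : α ≠ 0)
    (hproper : ∀ K : IntermediateField F E, α ∈ K → K = ⊤) :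
    Irreducible ((minpoly F α).comp (X ^ 2)) ↔
      ¬ IsSquare ((-1 : F) ^ n * (minpoly F α).coeff 0) := by
  haveI : FiniteDimensional F E := Module.Finite.of_finite
  have hint : IsIntegral F α := IsIntegral.of_finite F α
  have htop : IntermediateField.adjoin F {α} = ⊤ :=
    hproper _ (IntermediateField.mem_adjoin_simple_self F α)
  have hAdeg : (minpoly F α).natDegree = n := by
    have h := IntermediateField.adjoin.finrank hint
    rw [htop, IntermediateField.finrank_top', hrank] at h
    exact h.symm
  have hmc : ((minpoly F α).comp (X ^ 2) : F[X]).Monic :=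
    (minpoly.monic hint).comp (monic_X_pow 2) (by simp)
  have hdegcomp : ((minpoly F α).comp (X ^ 2)).natDegree = n * 2 := by
    rw [natDegree_comp, hAdeg, natDegree_X_pow]
  rw [aux_isSquare_norm_iff F E hq n hn hrank α hα htop]
  constructor
  · -- irreducible → α is not a square
    intro hirr
    rintro ⟨β, hβ⟩
    have hβ2 : β ^ 2 = α := by rw [hβ]; ring
    have h0 : Polynomial.aeval β ((minpoly F α).comp (X ^ 2)) = 0 := by
      rw [aeval_comp]
      simp only [map_pow, aeval_X]
      rw [hβ2, minpoly.aeval]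
    have heq := minpoly.eq_of_irreducible_of_monic hirr h0 hmc
    have hle := minpoly.natDegree_le (A := F) β
    rw [← heq, hdegcomp, hrank] at hle
    omega
  · -- α not a square → irreducible
    intro hns
    have hirr2 : Irreducible (X ^ 2 - C α) :=
      X_pow_sub_C_irreducible_of_prime Nat.prime_two
        (fun b hb => hns ⟨b, by rw [← hb]; ring⟩)
    haveI := Fact.mk hirr2
    set L := AdjoinRoot (X ^ 2 - C α) with hLdef
    haveI : FiniteDimensional E L :=
      (AdjoinRoot.powerBasis (fun hzero => by
        simpa [hzero] using hirr2.ne_zero hzero)).finite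
    haveI : FiniteDimensional F L := Module.Finite.trans E L
    set β : L := AdjoinRoot.root (X ^ 2 - C α) with hβdef
    have hβ2 : β ^ 2 = algebraMap E L α := by
      have h := AdjoinRoot.mk_self (f := X ^ 2 - C α)
      rw [map_sub, map_pow, AdjoinRoot.mk_X, AdjoinRoot.mk_C, sub_eq_zero] at h
      rw [AdjoinRoot.algebraMap_eq]
      exact h
    have hβint : IsIntegral F β := IsIntegral.of_finite F β
    have haeval : Polynomial.aeval β ((minpoly F α).comp (X ^ 2)) = 0 := by
      rw [aeval_comp]
      simp only [map_pow, aeval_X]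
      rw [hβ2, Polynomial.aeval_algebraMap_apply, minpoly.aeval, map_zero]
    have hdvd : minpoly F β ∣ (minpoly F α).comp (X ^ 2) := minpoly.dvd F β haeval
    -- the image of α in L
    set emb : E →ₐ[F] L := IsScalarTower.toAlgHom F E L with hembdef
    have hembinj : Function.Injective emb := emb.toRingHom.injective
    have hαL : minpoly F (emb α) = minpoly F α := minpoly.algHom_eq emb hembinj α
    set K : IntermediateField F L := IntermediateField.adjoin F {emb α} with hKdef
    have hKint : IsIntegral F (emb α) := IsIntegral.of_finite F (emb α)
    have hKrank : Module.finrank F K = n := by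
      rw [hKdef, IntermediateField.adjoin.finrank hKint, hαL, hAdeg]
    have hKrange : K = emb.fieldRange := by
      rw [AlgHom.fieldRange_eq_map, ← htop, IntermediateField.adjoin_map, Set.image_singleton]
    have hβnotK : β ∉ K := by
      intro hmem
      rw [hKrange] at hmem
      obtain ⟨γ, hγ⟩ := hmem
      have hγ' : emb γ = β := hγ
      apply hns
      refine ⟨γ, ?_⟩
      apply hembinj
      rw [map_mul, hγ', ← sq, hβ2]
      rfl
    have hβK2 : emb α ∈ IntermediateField.adjoin F {β} := by
      have hb : β ∈ IntermediateField.adjoin F {β} :=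
        IntermediateField.mem_adjoin_simple_self F β
      have : β ^ 2 ∈ IntermediateField.adjoin F {β} := pow_mem hb 2
      rw [hβ2] at this
      exact this
    have hKle : K ≤ IntermediateField.adjoin F {β} := by
      rw [hKdef, IntermediateField.adjoin_simple_le_iff]
      exact hβK2
    -- minpoly of β over K has degree 2
    have haK : (⟨emb α, IntermediateField.mem_adjoin_simple_self F (emb α)⟩ : K) = (⟨emb α, by
        rw [hKdef]; exact IntermediateField.mem_adjoin_simple_self F (emb α)⟩ : K) := rfl
    set a : K := ⟨emb α, by rw [hKdef]; exact IntermediateField.mem_adjoin_simple_self F (emb α)⟩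
      with hadef
    have haL : algebraMap K L a = emb α := rfl
    have hβKint : IsIntegral K β := IsIntegral.of_finite K β
    have haeval2 : Polynomial.aeval β ((X : K[X]) ^ 2 - C a) = 0 := by
      rw [map_sub, map_pow, aeval_X, aeval_C, haL, hβ2]
      exact sub_self _
    have hd2 : (minpoly K β).natDegree ≤ 2 := by
      have := Polynomial.natDegree_le_of_dvd (minpoly.dvd K β haeval2)
        (by
          intro hzero
          have : ((X : K[X]) ^ 2 - C a).natDegree = 2 := by
            rw [Polynomial.natDegree_X_pow_sub_C]
          simp [hzero] at this)
      rwa [Polynomial.natDegree_X_pow_sub_C] at this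
    have hd1 : 0 < (minpoly K β).natDegree := minpoly.natDegree_pos hβKint
    have hdne1 : (minpoly K β).natDegree ≠ 1 := by
      intro h1
      apply hβnotK
      have hfr : Module.finrank K (IntermediateField.adjoin K {β}) = 1 := by
        rw [IntermediateField.adjoin.finrank hβKint, h1]
      have hbot : IntermediateField.adjoin K {β} = ⊥ :=
        IntermediateField.finrank_eq_one_iff.mp hfr
      have : β ∈ IntermediateField.adjoin K {β} :=
        IntermediateField.mem_adjoin_simple_self K β
      rw [hbot, IntermediateField.mem_bot] at this
      obtain ⟨y, hy⟩ := this
      rw [← hy]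
      exact y.2
    have hd : (minpoly K β).natDegree = 2 := by omega
    -- finrank computation
    have hres : (IntermediateField.adjoin K {β}).restrictScalars F
        = IntermediateField.adjoin F {β} := by
      rw [IntermediateField.restrictScalars_adjoin_eq_sup]
      exact sup_eq_right.mpr hKle
    have hfrKβ : Module.finrank K (IntermediateField.adjoin K {β}) = 2 := by
      rw [IntermediateField.adjoin.finrank hβKint, hd]
    have hfinal : Module.finrank F (IntermediateField.adjoin F {β}) = n * 2 := by
      rw [← hres]
      have hmul := Module.finrank_mul_finrank F K (IntermediateField.adjoin K {β})
      have hsame : Module.finrank F ((IntermediateField.adjoin K {β}).restrictScalars F)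
          = Module.finrank F (IntermediateField.adjoin K {β}) := rfl
      rw [hsame, ← hmul, hKrank, hfrKβ]
    have hBdeg : (minpoly F β).natDegree = n * 2 := by
      rw [← IntermediateField.adjoin.finrank hβint, hfinal]
    -- conclude equality of polynomials
    obtain ⟨c, hc⟩ := hdvd
    have hcne : (minpoly F α).comp (X ^ 2) ≠ 0 := hmc.ne_zero
    have hBmonic : (minpoly F β).Monic := minpoly.monic hβint
    have hcmonic : c.Monic := by
      have := hmc
      rw [hc] at this
      exact hBmonic.of_mul_monic_left this
    have hcdeg : c.natDegree = 0 := by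
      have h := natDegree_mul hBmonic.ne_zero hcmonic.ne_zero
      rw [← hc, hdegcomp, hBdeg] at h
      omega
    have hc1 : c = 1 := hcmonic.natDegree_eq_zero.mp hcdeg
    rw [hc, hc1, mul_one]
    exact minpoly.irreducible hβint
end

section
/- Let q be an odd prime power, n ≥ 1, and α a nonzero proper element of F_{q^n} with minimal polynomial A(X) over F_q. If α is a square in F_{q^n}, say α = β^2, then A(X^2) factors over F_q as the product of two distinct monic irreducible polynomials C(X) and (-1)^n C(-X), where C(X) is the minimal polynomial of β over F_q. -/
open Polynomial

theorem stmt_3 (F E : Type*) [Field F] [Fintype F] [Field E] [Fintype E] [Algebra F E]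
    (hq : Odd (Fintype.card F)) (n : ℕ) (hn : 1 ≤ n) (hrank : Module.finrank F E = n)
    (α : E) (hα : α ≠ 0)
    (hproper : ∀ K : IntermediateField F E, α ∈ K → K = ⊤)
    (β : E) (hβ : β ^ 2 = α) :
    (minpoly F α).comp (X ^ 2) =
        minpoly F β * ((-1 : F[X]) ^ n * (minpoly F β).comp (-X)) ∧
    minpoly F β ≠ (-1 : F[X]) ^ n * (minpoly F β).comp (-X) ∧
    (minpoly F β).Monic ∧ Irreducible (minpoly F β) ∧
    ((-1 : F[X]) ^ n * (minpoly F β).comp (-X)).Monic ∧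
    Irreducible ((-1 : F[X]) ^ n * (minpoly F β).comp (-X)) := by
  have hfin : FiniteDimensional F E := Module.finite_of_finrank_pos (by omega)
  have hβ0 : β ≠ 0 := by rintro rfl; rw [← hβ] at hα; simp at hα
  have hint : IsIntegral F β := IsIntegral.of_finite F β
  have hintα : IsIntegral F α := IsIntegral.of_finite F α
  have hintn : IsIntegral F (-β) := IsIntegral.of_finite F (-β)
  have h2 : ringChar F ≠ 2 := by
    intro h
    have := FiniteField.even_card_iff_char_two.mp h
    rw [Nat.odd_iff] at hq; omega
  have h2E : ringChar E ≠ 2 := by rw [← Algebra.ringChar_eq F E]; exact h2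
  have hnegβ : -β ≠ β := fun h => hβ0 ((Ring.eq_self_iff_eq_zero_of_char_ne_two h2E).mp h)
  set A := minpoly F α with hA
  set C := minpoly F β with hC
  -- degrees
  have htopβ : IntermediateField.adjoin F {β} = ⊤ := by
    refine hproper _ ?_
    rw [← hβ]
    exact pow_mem (IntermediateField.mem_adjoin_simple_self F β) 2
  have htopn : IntermediateField.adjoin F {-β} = ⊤ := by
    refine hproper _ ?_
    rw [← hβ, ← neg_sq]
    exact pow_mem (IntermediateField.mem_adjoin_simple_self F (-β)) 2
  have htopα : IntermediateField.adjoin F {α} = ⊤ :=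
    hproper _ (IntermediateField.mem_adjoin_simple_self F α)
  have hCdeg : C.natDegree = n := by
    rw [hC, ← IntermediateField.adjoin.finrank hint, htopβ,
      IntermediateField.finrank_top', hrank]
  have hNdeg : (minpoly F (-β)).natDegree = n := by
    rw [← IntermediateField.adjoin.finrank hintn, htopn,
      IntermediateField.finrank_top', hrank]
  have hAdeg : A.natDegree = n := by
    rw [hA, ← IntermediateField.adjoin.finrank hintα, htopα,
      IntermediateField.finrank_top', hrank]
  have hCmon : C.Monic := minpoly.monic hint
  have hAmon : A.Monic := minpoly.monic hintα
  -- -β is not a root of C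
  have hnotroot : (aeval (-β)) C ≠ 0 := by
    intro hroot
    have hroots : -β ∈ (minpoly F β).aroots E := by
      rw [mem_aroots]
      exact ⟨minpoly.ne_zero hint, hroot⟩
    set φ : (IntermediateField.adjoin F {β}) →ₐ[F] E :=
      (IntermediateField.algHomAdjoinIntegralEquiv F hint).symm ⟨-β, hroots⟩ with hφ
    have hφgen : φ (IntermediateField.AdjoinSimple.gen F β) = -β :=
      IntermediateField.algHomAdjoinIntegralEquiv_symm_apply_gen F hint _
    set ψ : E →ₐ[F] (IntermediateField.adjoin F {β}) :=
      ((IntermediateField.equivOfEq htopβ.symm).toAlgHom.comp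
        IntermediateField.topEquiv.symm.toAlgHom) with hψ
    have hψval : ∀ x : E, (ψ x : E) = x := by
      intro x
      simp [hψ]
    set σ : E →ₐ[F] E := φ.comp ψ with hσ
    have hσβ : σ β = -β := by
      have : ψ β = IntermediateField.AdjoinSimple.gen F β := by
        apply Subtype.ext
        rw [hψval]
        rfl
      rw [hσ, AlgHom.comp_apply, this, hφgen]
    have hσα : σ α = α := by
      rw [← hβ, map_pow, hσβ, neg_sq]
    set K : IntermediateField F E :=
      (AlgHom.equalizer σ (AlgHom.id F E)).toIntermediateField
        (fun x hx => by
          have hx' : σ x = x := hx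
          show σ x⁻¹ = x⁻¹
          rw [map_inv₀, hx']) with hK
    have hαK : α ∈ K := by
      show σ α = α
      exact hσα
    have : K = ⊤ := hproper K hαK
    have hβK : β ∈ K := by rw [this]; trivial
    have : σ β = β := hβK
    rw [hσβ] at this
    exact hnegβ this
  -- D := (-1)^n * C.comp (-X)
  set D : F[X] := (-1 : F[X]) ^ n * C.comp (-X) with hD
  have hCcompdeg : (C.comp (-X)).natDegree = n := by
    rw [natDegree_comp]
    simp [hCdeg]
  have hneg1 : ((-1 : F[X]) ^ n) = Polynomial.C ((-1 : F) ^ n) := by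
    simp
  have hDdeg : D.natDegree = n := by
    rw [hD, hneg1, natDegree_C_mul (pow_ne_zero _ (neg_ne_zero.mpr (one_ne_zero)))]
    exact hCcompdeg
  have hDmon : D.Monic := by
    have hlc : (C.comp (-X)).leadingCoeff = (-1 : F) ^ n := by
      rw [leadingCoeff_comp (by simp)]
      simp [hCmon.leadingCoeff, hCdeg]
    unfold Polynomial.Monic
    rw [hD, hneg1, leadingCoeff_mul, leadingCoeff_C, hlc]
    simp [← pow_add]
  have hDroot : (aeval (-β)) D = 0 := by
    rw [hD, map_mul, aeval_comp]
    simp [hC, minpoly.aeval]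
  have hDeq : D = minpoly F (-β) :=
    eq_of_monic_of_dvd_of_natDegree_le (minpoly.monic hintn) hDmon
      (minpoly.dvd F (-β) hDroot) (by rw [hDdeg, hNdeg])
  have hne : C ≠ D := by
    intro h
    apply hnotroot
    rw [h]
    exact hDroot
  -- factorization
  have hcomp0 : (aeval β) (A.comp (X ^ 2)) = 0 := by
    rw [aeval_comp]
    simp [hβ, hA, minpoly.aeval]
  obtain ⟨R, hfac⟩ : C ∣ A.comp (X ^ 2) := minpoly.dvd F β hcomp0
  have hACmon : (A.comp (X ^ 2)).Monic :=
    hAmon.comp (monic_X_pow 2) (by simp)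
  have hACdeg : (A.comp (X ^ 2)).natDegree = 2 * n := by
    rw [natDegree_comp, hAdeg]
    simp [mul_comm]
  have hRmon : R.Monic := by
    have := hACmon
    rw [hfac] at this
    exact hCmon.of_mul_monic_left this
  have hRdeg : R.natDegree = n := by
    have := hACdeg
    rw [hfac, natDegree_mul hCmon.ne_zero hRmon.ne_zero, hCdeg] at this
    omega
  have hRroot : (aeval (-β)) R = 0 := by
    have h0 : (aeval (-β)) (A.comp (X ^ 2)) = 0 := by
      rw [aeval_comp]
      simp [neg_pow, hβ, hA, minpoly.aeval]
    rw [hfac, map_mul] at h0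
    exact (mul_eq_zero.mp h0).resolve_left hnotroot
  have hReq : R = D := by
    rw [hDeq]
    exact eq_of_monic_of_dvd_of_natDegree_le (minpoly.monic hintn) hRmon
      (minpoly.dvd F (-β) hRroot) (by rw [hRdeg, hNdeg])
  refine ⟨by rw [hfac, hReq], hne, hCmon, minpoly.irreducible hint, hDmon, ?_⟩
  rw [hDeq]
  exact minpoly.irreducible hintn
end

section
/- Let q be an odd prime power and n ≥ 1. A proper element β of F_{q^{2n}} satisfies β^2 ∈ F_{q^n} if and only if the minimal polynomial B(X) of β over F_q satisfies B(X) = A(X^2) for some polynomial A(X) ∈ F_q[X]; in this case A(X) is the minimal polynomial of β^2 over F_q. -/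
open Polynomial IntermediateField

/-- In a finite field extension `E/F`, any element whose generated subfield has
`F`-dimension `n` lies in any intermediate field of `F`-dimension `n`. -/
lemma aux_mem_of_finrank_eq (F E : Type*) [Field F] [Fintype F] [Field E] [Fintype E]
    [Algebra F E] (n : ℕ) (hn : 1 ≤ n) (K : IntermediateField F E)
    (hK : Module.finrank F K = n) (x : E) (hx : Module.finrank F F⟮x⟯ = n) : x ∈ K := by
  classical
  set m : ℕ := Fintype.card F ^ n with hm
  have hq2 : 2 ≤ Fintype.card F := Fintype.one_lt_card
  have hm2 : 2 ≤ m := le_trans hq2 (Nat.le_self_pow (by omega) _)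
  -- every element of a subfield of `F`-dimension `n` satisfies `y ^ m = y`
  have key : ∀ (L : IntermediateField F E), Module.finrank F L = n →
      ∀ y : E, y ∈ L → y ^ m = y := by
    intro L hL y hy
    have hcard : Fintype.card L = m := by
      rw [hm, ← hL]; exact Module.card_eq_pow_finrank
    have := FiniteField.pow_card (⟨y, hy⟩ : L)
    rw [hcard] at this
    have := congrArg (Subtype.val) this
    simpa using this
  -- the polynomial `X ^ m - X`
  set p : E[X] := X ^ m - X with hp
  have hpdeg : p.natDegree = m := by
    rw [hp, natDegree_sub_eq_left_of_natDegree_lt, natDegree_X_pow]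
    rw [natDegree_X, natDegree_X_pow]; omega
  have hpne : p ≠ 0 := by
    intro h
    rw [h] at hpdeg
    simp at hpdeg
    omega
  have hroot : ∀ y : E, y ^ m = y → y ∈ p.roots.toFinset := by
    intro y hy
    simp only [Multiset.mem_toFinset, mem_roots hpne, IsRoot.def, hp]
    simp [hy]
    exact hpne
  -- `K` as a finset sits inside the roots of `p`
  have hKsub : (Set.toFinset (K : Set E)) ⊆ p.roots.toFinset := by
    intro y hy
    rw [Set.mem_toFinset] at hy
    exact hroot y (key K hK y hy)
  have hcardK : (Set.toFinset (K : Set E)).card = m := by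
    rw [Set.toFinset_card]
    have hcardK' : Fintype.card K = m := by rw [hm, ← hK]; exact Module.card_eq_pow_finrank
    exact (Fintype.card_congr (Equiv.refl _)).trans hcardK'
  have hcardroots : p.roots.toFinset.card ≤ m := by
    calc p.roots.toFinset.card ≤ Multiset.card p.roots := Multiset.toFinset_card_le _
    _ ≤ p.natDegree := card_roots' p
    _ = m := hpdeg
  have heq : (Set.toFinset (K : Set E)) = p.roots.toFinset :=
    Finset.eq_of_subset_of_card_le hKsub (by omega)
  have hxroot : x ∈ p.roots.toFinset :=
    hroot x (key F⟮x⟯ hx x (IntermediateField.mem_adjoin_simple_self F x))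
  rw [← heq, Set.mem_toFinset] at hxroot
  exact hxroot

theorem stmt_5 (F E : Type*) [Field F] [Fintype F] [Field E] [Fintype E] [Algebra F E]
    (hq : Odd (Fintype.card F)) (n : ℕ) (hn : 1 ≤ n) (hrank : Module.finrank F E = 2 * n)
    (β : E)
    (hproper : ∀ K : IntermediateField F E, β ∈ K → K = ⊤)
    (K : IntermediateField F E) (hK : Module.finrank F K = n) :
    (β ^ 2 ∈ K ↔ ∃ A : F[X], minpoly F β = A.comp (X ^ 2)) ∧
    (β ^ 2 ∈ K → minpoly F β = (minpoly F (β ^ 2)).comp (X ^ 2)) := by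
  classical
  have hfd : FiniteDimensional F E := Module.Finite.of_finite
  have hintβ : IsIntegral F β := Algebra.IsIntegral.isIntegral β
  have hintβ2 : IsIntegral F (β ^ 2) := Algebra.IsIntegral.isIntegral _
  have hβtop : F⟮β⟯ = ⊤ := hproper _ (IntermediateField.mem_adjoin_simple_self F β)
  -- degree of the minimal polynomial of β is 2n
  have hdegβ : (minpoly F β).natDegree = 2 * n := by
    rw [← IntermediateField.adjoin.finrank hintβ, hβtop, ← hrank]
    exact (IntermediateField.topEquiv.toLinearEquiv.finrank_eq)
  have hX2deg : (X ^ 2 : F[X]).natDegree = 2 := by compute_degree!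
  -- the minimal polynomial of β divides (minpoly of β²) composed with X²
  have hdvd : minpoly F β ∣ (minpoly F (β ^ 2)).comp (X ^ 2) := by
    apply minpoly.dvd
    rw [aeval_comp]
    simp [minpoly.aeval]
  have hmonic2 : ((minpoly F (β ^ 2)).comp (X ^ 2)).Monic :=
    (minpoly.monic hintβ2).comp (monic_X_pow 2) (by rw [hX2deg]; norm_num)
  have hge : n ≤ (minpoly F (β ^ 2)).natDegree := by
    have := natDegree_le_of_dvd hdvd hmonic2.ne_zero
    rw [hdegβ, natDegree_comp, hX2deg] at this
    omega
  -- second part first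
  have hmain : β ^ 2 ∈ K → minpoly F β = (minpoly F (β ^ 2)).comp (X ^ 2) := by
    intro hβ2
    -- degree of minpoly of β² is at most n
    have hle : (minpoly F (β ^ 2)).natDegree ≤ n := by
      rw [← IntermediateField.adjoin.finrank hintβ2, ← hK]
      have hsub : F⟮β ^ 2⟯ ≤ K := by
        rw [IntermediateField.adjoin_simple_le_iff]; exact hβ2
      exact LinearMap.finrank_le_finrank_of_injective
        (f := (IntermediateField.inclusion hsub).toLinearMap)
        ((IntermediateField.inclusion hsub).toRingHom.injective)
    have hdeq : (minpoly F (β ^ 2)).natDegree = n := le_antisymm hle hge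
    -- both monic of degree 2n, one divides the other
    obtain ⟨c, hc⟩ := hdvd
    have hdegc : c.natDegree = 0 := by
      have hc0 : c ≠ 0 := by
        rintro rfl
        rw [mul_zero] at hc
        exact hmonic2.ne_zero hc
      have := congrArg natDegree hc
      rw [natDegree_comp, hX2deg, hdeq,
        natDegree_mul (minpoly.ne_zero hintβ) hc0, hdegβ] at this
      omega
    obtain ⟨u, rfl⟩ := natDegree_eq_zero.mp hdegc
    have hu1 : u = 1 := by
      have h2 := hmonic2
      rw [hc, Monic, leadingCoeff_mul, (minpoly.monic hintβ).leadingCoeff, one_mul,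
        leadingCoeff_C] at h2
      exact h2
    rw [hc, hu1, map_one, mul_one]
  refine ⟨⟨fun hβ2 => ⟨minpoly F (β ^ 2), hmain hβ2⟩, ?_⟩, hmain⟩
  -- converse direction
  rintro ⟨A, hA⟩
  have hAne : A ≠ 0 := by
    rintro rfl
    rw [zero_comp] at hA
    exact minpoly.ne_zero hintβ hA
  have hAdeg : A.natDegree = n := by
    have := congrArg natDegree hA
    rw [hdegβ, natDegree_comp, hX2deg] at this
    omega
  have hAroot : Polynomial.aeval (β ^ 2) A = 0 := by
    have : Polynomial.aeval β (A.comp (X ^ 2)) = 0 := by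
      rw [← hA]; exact minpoly.aeval F β
    rwa [aeval_comp, map_pow, aeval_X] at this
  have hle : (minpoly F (β ^ 2)).natDegree ≤ n := by
    rw [← hAdeg]
    exact natDegree_le_of_dvd (minpoly.dvd F _ hAroot) hAne
  have hdeq : Module.finrank F F⟮β ^ 2⟯ = n := by
    rw [IntermediateField.adjoin.finrank hintβ2]
    omega
  exact aux_mem_of_finrank_eq F E n hn K hK (β ^ 2) hdeq
end

section
/- Let q be an odd prime power and F(X) ∈ F_q[X] a monic irreducible polynomial of degree n ≥ 1 such that (-1)^n F(0) is a non-square in F_q. Then F(X^2) is irreducible over F_q. -/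
set_option maxHeartbeats 1000000

open Polynomial


lemma adjoin_top_of_tower {F K M : Type*} [CommSemiring F] [CommSemiring K] [CommSemiring M]
    [Algebra F K] [Algebra K M] [Algebra F M] [IsScalarTower F K M] {a : K} {b : M}
    (hK : Algebra.adjoin F {a} = ⊤) (hM : Algebra.adjoin K {b} = ⊤)
    (hab : algebraMap K M a ∈ Algebra.adjoin F {b}) :
    Algebra.adjoin F {b} = ⊤ := by
  rw [eq_top_iff]
  rintro x -
  have hx : x ∈ Algebra.adjoin K {b} := by rw [hM]; trivial
  induction hx using Algebra.adjoin_induction with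
  | mem y hy => exact Algebra.subset_adjoin hy
  | algebraMap r =>
    have hr : r ∈ Algebra.adjoin F {a} := by rw [hK]; trivial
    induction hr using Algebra.adjoin_induction with
    | mem y hy =>
      rcases hy with rfl
      exact hab
    | algebraMap s =>
      rw [← IsScalarTower.algebraMap_apply]
      exact Subalgebra.algebraMap_mem _ s
    | add u v hu hv ihu ihv => rw [map_add]; exact add_mem ihu ihv
    | mul u v hu hv ihu ihv => rw [map_mul]; exact mul_mem ihu ihv
  | add u v hu hv ihu ihv => exact add_mem ihu ihv
  | mul u v hu hv ihu ihv => exact mul_mem ihu ihv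

theorem stmt_6 (F : Type*) [Field F] [Fintype F] (hq : Odd (Fintype.card F))
    (n : ℕ) (hn : 1 ≤ n) (P : F[X]) (hm : P.Monic) (hirr : Irreducible P)
    (hdeg : P.natDegree = n) (hns : ¬ IsSquare ((-1 : F) ^ n * P.coeff 0)) :
    Irreducible (P.comp (X ^ 2)) := by
  haveI : Fact (Irreducible P) := ⟨hirr⟩
  set K := AdjoinRoot P with hK
  set α := AdjoinRoot.root P with hα
  have hP0 : P ≠ 0 := hm.ne_zero
  have hminα : minpoly F α = P := by
    rw [hα, AdjoinRoot.minpoly_root hP0, hm.leadingCoeff, inv_one, map_one, mul_one]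
  -- α is not a square in K
  have hαns : ¬ IsSquare α := by
    rintro ⟨γ, hγ⟩
    apply hns
    have hnorm : Algebra.norm F α = (-1 : F) ^ n * P.coeff 0 := by
      have h := Algebra.PowerBasis.norm_gen_eq_coeff_zero_minpoly
        (AdjoinRoot.powerBasis hP0)
      rwa [AdjoinRoot.powerBasis_gen, AdjoinRoot.powerBasis_dim, ← hα, hminα, hdeg] at h
    rw [← hnorm, hγ, map_mul]
    exact ⟨_, rfl⟩
  -- X^2 - C α is irreducible over K
  have hgi : Irreducible (X ^ 2 - C α) := by
    refine X_pow_sub_C_irreducible_of_prime Nat.prime_two fun b hb => hαns ⟨b, ?_⟩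
    rw [← hb]; ring
  haveI : Fact (Irreducible (X ^ 2 - C α)) := ⟨hgi⟩
  have hg0 : (X ^ 2 - C α) ≠ 0 := hgi.ne_zero
  set M := AdjoinRoot (X ^ 2 - C α) with hM
  set β := AdjoinRoot.root (X ^ 2 - C α) with hβ
  have hβ2 : β ^ 2 = algebraMap K M α := by
    have := root_X_pow_sub_C_pow 2 α
    rwa [← AdjoinRoot.algebraMap_eq] at this
  have h0 : aeval α P = 0 := by
    rw [hα, AdjoinRoot.aeval_eq, AdjoinRoot.mk_self]
  have haeval : aeval β (P.comp (X ^ 2)) = 0 := by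
    rw [aeval_comp, aeval_X_pow, hβ2, aeval_algebraMap_apply, h0, map_zero]
  have hmc : (P.comp (X ^ 2)).Monic := hm.comp (monic_X_pow 2) (by simp)
  have hint : IsIntegral F β := ⟨P.comp (X ^ 2), hmc, haeval⟩
  have hdegf : (P.comp (X ^ 2)).natDegree = 2 * n := by
    rw [natDegree_comp, natDegree_X_pow, hdeg, mul_comm]
  -- adjoin F {β} = ⊤
  have hadj : Algebra.adjoin F {β} = ⊤ := by
    refine adjoin_top_of_tower (a := α) (AdjoinRoot.adjoinRoot_eq_top)
      (AdjoinRoot.adjoinRoot_eq_top) ?_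
    have hb : β ∈ Algebra.adjoin F {β} := Algebra.subset_adjoin rfl
    have hbb := mul_mem hb hb
    rwa [← pow_two, hβ2] at hbb
  -- finrank computations
  haveI : FiniteDimensional F K := PowerBasis.finite (AdjoinRoot.powerBasis hP0)
  haveI : FiniteDimensional K M := PowerBasis.finite (AdjoinRoot.powerBasis hg0)
  haveI : FiniteDimensional F M := FiniteDimensional.trans F K M
  have hrkK : Module.finrank F K = n := by
    rw [(AdjoinRoot.powerBasis hP0).finrank, AdjoinRoot.powerBasis_dim, hdeg]
  have hrkM : Module.finrank K M = 2 := by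
    rw [(AdjoinRoot.powerBasis hg0).finrank, AdjoinRoot.powerBasis_dim,
      natDegree_X_pow_sub_C]
  have hrk : Module.finrank F M = 2 * n := by
    rw [← Module.finrank_mul_finrank F K M, hrkK, hrkM, mul_comm]
  have hEtop : IntermediateField.adjoin F {β} = ⊤ := by
    rw [eq_top_iff]
    intro x _
    exact IntermediateField.algebra_adjoin_le_adjoin F {β} (by rw [hadj]; trivial)
  have hdm : (minpoly F β).natDegree = 2 * n := by
    rw [← IntermediateField.adjoin.finrank hint, hEtop,
      IntermediateField.finrank_top', hrk]
  have heq : P.comp (X ^ 2) = minpoly F β :=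
    eq_of_monic_of_dvd_of_natDegree_le (minpoly.monic hint) hmc
      (minpoly.dvd F β haeval) (by rw [hdegf, hdm])
  rw [heq]
  exact minpoly.irreducible hint
end

section
/- Let q be odd, n ≥ 2, and C(X) a monic irreducible polynomial of degree n over F_q with C(X) ≠ X. Then C(X) = D(X^2) for some D(X) ∈ F_q[X] if and only if n is even and the order of C(X) divides 2(q^{n/2} - 1). -/
open Polynomial IntermediateField Module

section Aux
variable {F E : Type*} [Field F] [Fintype F] [Field E] [Fintype E] [Algebra F E]

lemma auxA (x : E) : x ^ (Fintype.card F) ^ (finrank F F⟮x⟯) = x := by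
  haveI : Fintype F⟮x⟯ := Fintype.ofFinite _
  have h1 : Fintype.card F⟮x⟯ = Fintype.card F ^ finrank F F⟮x⟯ := card_eq_pow_finrank
  have h2 := FiniteField.pow_card (AdjoinSimple.gen F x)
  rw [h1] at h2
  have := congrArg (algebraMap F⟮x⟯ E) h2
  rwa [map_pow, AdjoinSimple.algebraMap_gen] at this

omit [Fintype E] in
lemma auxB (k : ℕ) : ∃ φ : E →ₐ[F] E, ∀ x : E, φ x = x ^ (Fintype.card F) ^ k := by
  have hp : Nat.Prime (ringChar F) := CharP.char_is_prime F (ringChar F)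
  haveI : Fact (Nat.Prime (ringChar F)) := ⟨hp⟩
  haveI : CharP E (ringChar F) := charP_of_injective_algebraMap (algebraMap F E).injective _
  obtain ⟨m, -, hcard⟩ := FiniteField.card F (ringChar F)
  refine ⟨⟨iterateFrobenius E (ringChar F) ((m : ℕ) * k), fun a => ?_⟩, fun x => ?_⟩
  · show (algebraMap F E a) ^ (ringChar F) ^ ((m:ℕ) * k) = algebraMap F E a
    rw [← map_pow]
    congr 1
    calc a ^ (ringChar F) ^ ((m:ℕ) * k) = a ^ ((ringChar F) ^ (m:ℕ)) ^ k := by rw [← pow_mul]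
    _ = a ^ (Fintype.card F) ^ k := by rw [hcard]
    _ = a := FiniteField.pow_card_pow k a
  · show x ^ (ringChar F) ^ ((m:ℕ) * k) = x ^ (Fintype.card F) ^ k
    rw [pow_mul, hcard]

end Aux

lemma auxD {F : Type*} [Field F] (P : F[X]) (hodd : ∀ i, Odd i → P.coeff i = 0) :
    ∃ D : F[X], P = D.comp (X ^ 2) := by
  refine ⟨∑ i ∈ Finset.range (P.natDegree + 1), C (P.coeff (2 * i)) * X ^ i, ?_⟩
  rw [sum_comp]
  simp only [mul_comp, C_comp, X_pow_comp, ← pow_mul]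
  ext j
  rw [finset_sum_coeff]
  simp only [coeff_C_mul, coeff_X_pow]
  rcases Nat.even_or_odd j with ⟨i₀, hi⟩ | hj
  · have hj2 : j = 2 * i₀ := by omega
    subst hj2
    by_cases hle : i₀ ≤ P.natDegree
    · rw [Finset.sum_eq_single i₀]
      · simp
      · intro b _ hb
        rw [if_neg (by omega), mul_zero]
      · intro h; exact absurd (Finset.mem_range.2 (by omega)) h
    · rw [P.coeff_eq_zero_of_natDegree_lt (by omega), Finset.sum_eq_zero]
      intro b hb
      rw [if_neg (by simp at hb; omega), mul_zero]
  · obtain ⟨c, hc⟩ := hj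
    rw [hodd j ⟨c, hc⟩, Finset.sum_eq_zero]
    intro b _
    rw [if_neg (by omega), mul_zero]

lemma auxN {F : Type*} [Field F] (P : F[X]) (i : ℕ) :
    (P.comp (-X)).coeff i = (-1) ^ i * P.coeff i := by
  rw [comp_eq_sum_left, Polynomial.sum_def, finset_sum_coeff]
  have h : ∀ e ∈ P.support, (C (P.coeff e) * (-X) ^ e).coeff i
      = (if i = e then (-1) ^ i * P.coeff e else 0) := by
    intro e _
    rw [neg_pow, ← C_1, ← C_neg, ← C_pow, ← mul_assoc, ← C_mul, coeff_C_mul, coeff_X_pow]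
    split_ifs with hie
    · subst hie; ring
    · rw [mul_zero]
  rw [Finset.sum_congr rfl h, Finset.sum_ite_eq]
  split_ifs with hi
  · rfl
  · rw [Polynomial.notMem_support_iff.1 hi, mul_zero]

set_option synthInstance.maxHeartbeats 1000000 in
set_option maxHeartbeats 2000000 in
theorem stmt_10 (F E : Type*) [Field F] [Fintype F] [Field E] [Fintype E] [Algebra F E]
    (hq : Odd (Fintype.card F)) (n : ℕ) (hn : 2 ≤ n) (hrank : Module.finrank F E = n)
    (P : F[X]) (hm : P.Monic) (hirr : Irreducible P) (hdeg : P.natDegree = n)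
    (hPX : P ≠ X) (γ : E) (hγ : Polynomial.aeval γ P = 0) :
    (∃ D : F[X], P = D.comp (X ^ 2)) ↔
      (Even n ∧ orderOf γ ∣ 2 * (Fintype.card F ^ (n / 2) - 1)) := by
  classical
  have hminpoly : minpoly F γ = P := (minpoly.eq_of_irreducible_of_monic hirr hγ hm).symm
  have hint : IsIntegral F γ := IsIntegral.of_finite F γ
  have hγ0 : γ ≠ 0 := by
    rintro rfl
    have h0 : P.coeff 0 = 0 := by
      rw [aeval_def, eval₂_at_zero] at hγ
      exact (algebraMap F E).injective (by rwa [map_zero])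
    exact hPX (eq_of_monic_of_associated hm monic_X
      (irreducible_X.associated_of_dvd hirr (X_dvd_iff.2 h0)).symm)
  have hq2 : 2 ≤ Fintype.card F := Fintype.one_lt_card
  have htop : F⟮γ⟯ = ⊤ := by
    refine eq_of_le_of_finrank_eq le_top ?_
    rw [adjoin.finrank hint, hminpoly, hdeg, finrank_top', hrank]
  constructor
  · rintro ⟨D, hD⟩
    have h2 : n = D.natDegree * 2 := by
      rw [← hdeg, hD, natDegree_comp, natDegree_X_pow]
    set h := D.natDegree with hh
    have hβ : aeval (γ ^ 2) D = 0 := by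
      rw [← hγ, hD, aeval_comp]
      congr 1
      simp
    have hD0 : D ≠ 0 := by
      rintro rfl
      exact hm.ne_zero (by simpa using hD)
    have hd_le : finrank F F⟮γ ^ 2⟯ ≤ h := by
      rw [adjoin.finrank (IsIntegral.of_finite F _)]
      exact natDegree_le_of_dvd (minpoly.dvd F _ hβ) hD0
    have htop2 : IntermediateField.adjoin F⟮γ ^ 2⟯ {γ} = ⊤ :=
      adjoin_eq_top_of_adjoin_eq_top F (S := {γ}) htop
    have he2 : finrank F⟮γ ^ 2⟯ E ≤ 2 := by
      have hgint : IsIntegral F⟮γ ^ 2⟯ γ := .of_finite _ γ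
      have hXC : (X ^ 2 - C (AdjoinSimple.gen F (γ ^ 2)) : F⟮γ ^ 2⟯[X]) ≠ 0 :=
        (monic_X_pow_sub_C _ two_ne_zero).ne_zero
      calc finrank F⟮γ ^ 2⟯ E = finrank F⟮γ ^ 2⟯ F⟮γ ^ 2⟯⟮γ⟯ := by rw [htop2, finrank_top']
      _ = (minpoly F⟮γ ^ 2⟯ γ).natDegree := adjoin.finrank hgint
      _ ≤ (X ^ 2 - C (AdjoinSimple.gen F (γ ^ 2)) : F⟮γ ^ 2⟯[X]).natDegree := by
          refine natDegree_le_of_dvd (minpoly.dvd _ _ ?_) hXC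
          simp [AdjoinSimple.algebraMap_gen]
      _ ≤ 2 := by
          rw [natDegree_X_pow_sub_C]
    have hmul : finrank F F⟮γ ^ 2⟯ * finrank F⟮γ ^ 2⟯ E = n := by
      rw [finrank_mul_finrank, hrank]
    have hK : finrank F F⟮γ ^ 2⟯ = h := by
      have h1 : 1 ≤ h := by omega
      nlinarith [hmul, hd_le, he2]
    have hfix : (γ ^ 2) ^ Fintype.card F ^ h = γ ^ 2 := by
      have := auxA (F := F) (γ ^ 2)
      rwa [hK] at this
    refine ⟨⟨h, by omega⟩, ?_⟩
    have hn2 : n / 2 = h := by omega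
    rw [hn2, orderOf_dvd_iff_pow_eq_one]
    have hq1 : 1 ≤ Fintype.card F ^ h := Nat.one_le_pow _ _ Fintype.card_pos
    have key : γ ^ (2 * (Fintype.card F ^ h - 1)) * γ ^ 2 = 1 * γ ^ 2 := by
      rw [one_mul, ← pow_add]
      have he : 2 * (Fintype.card F ^ h - 1) + 2 = 2 * Fintype.card F ^ h := by omega
      rw [he, pow_mul, hfix]
    exact mul_right_cancel₀ (pow_ne_zero 2 hγ0) key
  · rintro ⟨hev, hord⟩
    set h := n / 2 with hh
    have hn2 : n = 2 * h := by
      obtain ⟨c, hc⟩ := hev; omega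
    have hq1 : 1 ≤ Fintype.card F ^ h := Nat.one_le_pow _ _ Fintype.card_pos
    have h2m : γ ^ (2 * (Fintype.card F ^ h - 1)) = 1 := orderOf_dvd_iff_pow_eq_one.1 hord
    have hsq : (γ ^ (Fintype.card F ^ h - 1) - 1) * (γ ^ (Fintype.card F ^ h - 1) + 1) = 0 := by
      have hs : (γ ^ (Fintype.card F ^ h - 1)) ^ 2 = 1 := by
        rw [← pow_mul, mul_comm, h2m]
      linear_combination hs
    obtain ⟨φ, hφ⟩ := auxB (F := F) (E := E) h
    rcases mul_eq_zero.1 hsq with h1 | h1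
    · exfalso
      have hm1 : γ ^ (Fintype.card F ^ h - 1) = 1 := by linear_combination h1
      have hfixγ : γ ^ Fintype.card F ^ h = γ := by
        calc γ ^ Fintype.card F ^ h = γ ^ (Fintype.card F ^ h - 1) * γ := by
              rw [← pow_succ]; congr 1; omega
        _ = γ := by rw [hm1, one_mul]
      have hadj : Algebra.adjoin F {γ} = ⊤ := by
        rw [← adjoin_simple_toSubalgebra_of_isAlgebraic hint.isAlgebraic, htop]
        rfl
      have hsub : Algebra.adjoin F {γ} ≤ AlgHom.equalizer φ (AlgHom.id F E) :=
        Algebra.adjoin_le (Set.singleton_subset_iff.2 (show φ γ = γ by rw [hφ, hfixγ]))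
      have hfix : ∀ x : E, x ^ Fintype.card F ^ h = x := by
        intro x
        have hx : x ∈ AlgHom.equalizer φ (AlgHom.id F E) := by
          rw [hadj] at hsub
          exact hsub Algebra.mem_top
        have : φ x = x := hx
        rwa [hφ] at this
      obtain ⟨g, hg⟩ := IsCyclic.exists_generator (α := Eˣ)
      have hordg : orderOf (g : E) = Fintype.card E - 1 := by
        rw [orderOf_units, orderOf_eq_card_of_forall_mem_zpowers hg, Nat.card_units,
          Nat.card_eq_fintype_card]
      have hg1 : (g : E) ^ (Fintype.card F ^ h - 1) = 1 := by
        have hf := hfix (g : E)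
        have : (g : E) ^ (Fintype.card F ^ h - 1) * g = 1 * g := by
          rw [one_mul, ← pow_succ]
          rw [show Fintype.card F ^ h - 1 + 1 = Fintype.card F ^ h by omega, hf]
        exact mul_right_cancel₀ g.ne_zero this
      have hdvd := orderOf_dvd_of_pow_eq_one hg1
      rw [hordg] at hdvd
      have hcardE : Fintype.card E = Fintype.card F ^ n := by
        rw [card_eq_pow_finrank (K := F) (V := E), hrank]
      have hle : Fintype.card F ^ n - 1 ≤ Fintype.card F ^ h - 1 := by
        refine Nat.le_of_dvd ?_ (hcardE ▸ hdvd)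
        have : 2 ≤ Fintype.card F ^ h := by
          calc 2 = 2 ^ 1 := rfl
          _ ≤ Fintype.card F ^ h := Nat.pow_le_pow_left hq2 1 |>.trans
              (Nat.pow_le_pow_right (by omega) (by omega))
        omega
      have hlt : Fintype.card F ^ h < Fintype.card F ^ n :=
        Nat.pow_lt_pow_right hq2 (by omega)
      omega
    · have hm1 : γ ^ (Fintype.card F ^ h - 1) = -1 := by linear_combination h1
      have hneg : γ ^ Fintype.card F ^ h = -γ := by
        calc γ ^ Fintype.card F ^ h = γ ^ (Fintype.card F ^ h - 1) * γ := by
              rw [← pow_succ]; congr 1; omega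
        _ = -γ := by rw [hm1]; ring
      have hroot : aeval (-γ) P = 0 := by
        have happ := aeval_algHom_apply φ γ P
        rwa [hγ, map_zero, hφ, hneg] at happ
      have hQ : P.comp (-X) = P := by
        have hnX : ((-X : F[X])).natDegree = 1 := by
          rw [natDegree_neg, natDegree_X]
        have hmQ : (P.comp (-X)).Monic := by
          unfold Monic
          rw [leadingCoeff_comp (by rw [hnX]; norm_num)]
          rw [leadingCoeff_neg, leadingCoeff_X, hm.leadingCoeff, hdeg, one_mul,
            hev.neg_one_pow]
        have hd : (P.comp (-X)).natDegree = n := by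
          rw [natDegree_comp, hnX, hdeg, mul_one]
        have hdvd : P ∣ P.comp (-X) := by
          rw [← hminpoly]
          refine minpoly.dvd F γ ?_
          rw [aeval_comp, hminpoly]
          simpa using hroot
        obtain ⟨c, hc⟩ := hdvd
        have hc0 : c ≠ 0 := by
          rintro rfl
          rw [mul_zero] at hc
          exact hmQ.ne_zero hc
        have hcm : c.Monic := hm.of_mul_monic_left (hc ▸ hmQ)
        have hcd : c.natDegree = 0 := by
          have := hd
          rw [hc, natDegree_mul hm.ne_zero hc0, hdeg] at this
          omega
        rw [hc, eq_one_of_monic_natDegree_zero hcm hcd, mul_one]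
      have hodd : ∀ i, Odd i → P.coeff i = 0 := by
        intro i hi
        have haux := auxN P i
        rw [hQ, hi.neg_one_pow, neg_one_mul] at haux
        have h2 : (2 : F) ≠ 0 := by
          intro h20
          have hpchar : Nat.Prime (ringChar F) := CharP.char_is_prime F (ringChar F)
          haveI : Fact (Nat.Prime (ringChar F)) := ⟨hpchar⟩
          have : (ringChar F : ℕ) ∣ 2 := by
            have := (CharP.cast_eq_zero_iff F (ringChar F) 2).1 (by exact_mod_cast h20)
            exact this
          have hr2 : ringChar F = 2 := ((Nat.prime_dvd_prime_iff_eq hpchar Nat.prime_two).1 this)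
          obtain ⟨m, -, hcard⟩ := FiniteField.card F (ringChar F)
          rw [hr2] at hcard
          rw [hcard] at hq
          exact (Nat.not_odd_iff_even.2 (Nat.even_pow.2 ⟨even_two, m.pos.ne'⟩)) hq
        have : (2 : F) * P.coeff i = 0 := by linear_combination haux
        rcases mul_eq_zero.1 this with hbad | hgood
        · exact absurd hbad h2
        · exact hgood
      exact auxD P hodd
end

section
/- Let q be odd, n ≥ 1, and C(X) = X^n + Σ_{i=0}^{n-1} c_i X^i a monic irreducible polynomial over F_q, and let A(X) ∈ F_q[X] be the degree-n polynomial with C(X)·(-1)^n C(-X) = A(X^2). Then A(X) is irreducible over F_q if and only if there exists at least one odd index 1 ≤ i ≤ n with c_i ≠ 0 (with c_n = 1). -/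
open Polynomial

private lemma coeff_comp_neg_X {F : Type*} [CommRing F] (p : F[X]) (i : ℕ) :
    (p.comp (-X)).coeff i = (-1) ^ i * p.coeff i := by
  induction p using Polynomial.induction_on' with
  | add p q hp hq => simp [add_comp, hp, hq, mul_add]
  | monomial k a =>
      rw [← C_mul_X_pow_eq_monomial, mul_comp, C_comp, pow_comp, X_comp, neg_pow (X : F[X]) k]
      have hC : ((-1 : F[X]) ^ k) = C ((-1 : F) ^ k) := by
        rw [map_pow, map_neg, map_one]
      rw [hC, mul_left_comm, coeff_C_mul, coeff_C_mul, coeff_X_pow]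
      rcases eq_or_ne i k with rfl | h
      · simp
      · simp [h]

private lemma monic_eq_of_dvd' {F : Type*} [Field F] {p q : F[X]} (hp : p.Monic) (hq : q.Monic)
    (h : p ∣ q) (hd : q.natDegree ≤ p.natDegree) : p = q := by
  obtain ⟨c, rfl⟩ := h
  have hc : c ≠ 0 := right_ne_zero_of_mul hq.ne_zero
  have hdc : c.natDegree = 0 := by
    rw [natDegree_mul hp.ne_zero hc] at hd; omega
  obtain ⟨a, rfl⟩ : ∃ a, c = C a := ⟨c.coeff 0, (eq_C_of_natDegree_eq_zero hdc)⟩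
  have : a = 1 := by
    have := hq.leadingCoeff
    rwa [leadingCoeff_mul, hp.leadingCoeff, one_mul, leadingCoeff_C] at this
  simp [this]

theorem stmt_12 (F : Type*) [Field F] [Fintype F] (hq : Odd (Fintype.card F))
    (n : ℕ) (hn : 1 ≤ n) (P : F[X]) (hm : P.Monic) (hirr : Irreducible P)
    (hdeg : P.natDegree = n)
    (A : F[X]) (hA : A.natDegree = n)
    (hcomp : P * ((-1 : F[X]) ^ n * P.comp (-X)) = A.comp (X ^ 2)) :
    Irreducible A ↔ ∃ i, Odd i ∧ 1 ≤ i ∧ i ≤ n ∧ P.coeff i ≠ 0 := by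
  have h1 : (1 : F) ≠ 0 := one_ne_zero
  have h2 : (2 : F) ≠ 0 := by
    intro h20
    have hdvd : ringChar F ∣ 2 := ringChar.dvd (by exact_mod_cast h20)
    have hch : ringChar F = 2 :=
      ((Nat.dvd_prime Nat.prime_two).mp hdvd).resolve_left CharP.ringChar_ne_one
    have := FiniteField.even_card_iff_char_two.mp hch
    have := Nat.odd_iff.mp hq
    omega
  have hCpow : ((-1 : F[X]) ^ n) = C ((-1 : F) ^ n) := by rw [map_pow, map_neg, map_one]
  have hX2deg : ((X : F[X]) ^ 2).natDegree ≠ 0 := by simp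
  have hBm : ((-1 : F[X]) ^ n * P.comp (-X)).Monic := by
    have hc : (P.comp (-X)).leadingCoeff = (-1 : F) ^ n := by
      rw [leadingCoeff_comp (by simp : ((-X : F[X])).natDegree ≠ 0)]
      simp [hm.leadingCoeff, hdeg]
    rw [Monic, hCpow, leadingCoeff_mul, leadingCoeff_C, hc, ← pow_add]
    exact Even.neg_one_pow ⟨n, rfl⟩
  have hAmonic : A.Monic := by
    have hprod := hm.mul hBm
    rw [hcomp] at hprod
    have := hprod.leadingCoeff
    rwa [leadingCoeff_comp hX2deg, leadingCoeff_X_pow, one_pow, mul_one] at this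
  have hA0 : A ≠ 0 := hAmonic.ne_zero
  constructor
  · -- Irreducible A → witness
    intro hAirr
    by_contra hno
    push_neg at hno
    have hodd : ∀ i, Odd i → P.coeff i = 0 := by
      intro i hi
      by_cases h : i ≤ n
      · exact hno i hi hi.pos h
      · exact coeff_eq_zero_of_natDegree_lt (by omega)
    have hneven : Even n := by
      rcases Nat.even_or_odd n with he | ho
      · exact he
      · exfalso
        have := hodd n ho
        rw [← hdeg, hm.coeff_natDegree] at this
        exact h1 this
    have hPev : P.comp (-X) = P := by
      ext j
      rw [coeff_comp_neg_X]
      rcases Nat.even_or_odd j with he | ho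
      · rw [he.neg_one_pow, one_mul]
      · rw [hodd j ho, mul_zero]
    have hA2 : A.comp (X ^ 2) = P * P := by
      rw [← hcomp, hPev, hCpow, Even.neg_one_pow hneven, map_one, one_mul]
    set D : F[X] := ∑ i ∈ P.support, C (P.coeff i) * X ^ (i / 2) with hDdef
    have hsupp : ∀ i ∈ P.support, 2 * (i / 2) = i := by
      intro i hi
      have : ¬ Odd i := fun ho => (mem_support_iff.mp hi) (hodd i ho)
      obtain ⟨k, rfl⟩ := Nat.not_odd_iff_even.mp this
      omega
    have hD : D.comp (X ^ 2) = P := by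
      rw [hDdef, sum_comp]
      have : ∀ i ∈ P.support, (C (P.coeff i) * X ^ (i / 2)).comp (X ^ 2)
          = monomial i (P.coeff i) := by
        intro i hi
        rw [mul_comp, C_comp, pow_comp, X_comp, ← pow_mul, hsupp i hi,
          C_mul_X_pow_eq_monomial]
      rw [Finset.sum_congr rfl this, ← as_sum_support]
    have hDA : A = D * D := by
      have hc2 : (D * D).comp (X ^ 2) = A.comp (X ^ 2) := by
        rw [mul_comp, hD, hA2]
      have hsub : (A - D * D).comp (X ^ 2) = 0 := by rw [sub_comp, hc2, sub_self]
      rcases comp_eq_zero_iff.mp hsub with h | ⟨_, hX⟩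
      · exact sub_eq_zero.mp h
      · exfalso
        have := congrArg natDegree hX
        simp at this
    rcases hAirr.isUnit_or_isUnit hDA with hu | hu <;>
    · have hd0 : D.natDegree = 0 := natDegree_eq_zero_of_isUnit hu
      have := natDegree_mul_le (p := D) (q := D)
      rw [← hDA, hA, hd0] at this
      omega
  · rintro ⟨i, hiodd, hi1, hin, hci⟩
    have neg_cancel : ∀ c : F, c = -c → c = 0 := by
      intro c hc
      have h2c : (2 : F) * c = 0 := by
        rw [two_mul]
        nth_rewrite 2 [hc]
        ring
      rcases mul_eq_zero.mp h2c with h | h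
      · exact absurd h h2
      · exact h
    haveI : Fact (Irreducible P) := ⟨hirr⟩
    set K := AdjoinRoot P with hK
    set α : K := AdjoinRoot.root P with hα
    have hPa : (aeval α) P = 0 := by rw [hα, AdjoinRoot.aeval_eq, AdjoinRoot.mk_self]
    haveI : Module.Finite F K := Module.Finite.of_basis (AdjoinRoot.powerBasis hm.ne_zero).basis
    have hint : IsIntegral F (α ^ 2) := IsIntegral.of_finite F _
    set Q := minpoly F (α ^ 2) with hQ
    have hQmonic : Q.Monic := minpoly.monic hint
    have hQ0 : Q ≠ 0 := hQmonic.ne_zero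
    have hAroot : (aeval (α ^ 2)) A = 0 := by
      have h := congrArg (aeval α) hcomp
      rw [map_mul, hPa, zero_mul, aeval_comp, map_pow, aeval_X] at h
      exact h.symm
    have hQA : Q ∣ A := minpoly.dvd F _ hAroot
    have hQn : Q.natDegree ≤ n := hA ▸ natDegree_le_of_dvd hQA hA0
    have hminα : minpoly F α = P := (minpoly.eq_of_irreducible_of_monic hirr hPa hm).symm
    have hPQ2 : P ∣ Q.comp (X ^ 2) := by
      rw [← hminα]
      exact minpoly.dvd F α (by rw [aeval_comp, map_pow, aeval_X]; exact minpoly.aeval F (α ^ 2))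
    have hBdeg : ((-1 : F[X]) ^ n * P.comp (-X)).natDegree = n := by
      rw [hCpow, natDegree_C_mul (pow_ne_zero _ (neg_ne_zero.mpr h1)), natDegree_comp]
      simp [hdeg]
    by_cases hPB : P = (-1 : F[X]) ^ n * P.comp (-X)
    · by_cases hnodd : Odd n
      · -- then P = X, n = 1, A linear
        have h0 : P.coeff 0 = 0 := by
          have h := congrArg (fun p => Polynomial.coeff p 0) hPB
          simp only [hCpow, coeff_C_mul, coeff_comp_neg_X, pow_zero, one_mul] at h
          rw [Odd.neg_one_pow hnodd, neg_one_mul] at h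
          exact neg_cancel _ h
        obtain ⟨c, hc⟩ := X_dvd_iff.mpr h0
        rcases hirr.isUnit_or_isUnit hc with hu | hu
        · exact absurd hu not_isUnit_X
        · have hc0 : c.natDegree = 0 := natDegree_eq_zero_of_isUnit hu
          have hcne : c ≠ 0 := by
            intro h0'
            rw [h0', mul_zero] at hc
            exact hm.ne_zero hc
          have hn1 : n = 1 := by
            rw [← hdeg, hc, natDegree_mul X_ne_zero hcne, natDegree_X, hc0]
          apply irreducible_of_degree_eq_one
          have : A.degree = ((1 : ℕ) : WithBot ℕ) :=
            (degree_eq_iff_natDegree_eq hA0).mpr (hA.trans hn1)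
          exact_mod_cast this
      · exfalso
        have h := congrArg (fun p => Polynomial.coeff p i) hPB
        simp only [hCpow, coeff_C_mul, coeff_comp_neg_X] at h
        rw [Even.neg_one_pow (Nat.not_odd_iff_even.mp hnodd), one_mul,
          Odd.neg_one_pow hiodd, neg_one_mul] at h
        exact hci (neg_cancel _ h)
    · have hPcdvd : P.comp (-X) ∣ Q.comp (X ^ 2) := by
        obtain ⟨g, hg⟩ := hPQ2
        refine ⟨g.comp (-X), ?_⟩
        have h := congrArg (fun p => p.comp (-X)) hg
        simp only [mul_comp] at h
        rwa [comp_assoc, pow_comp, X_comp, neg_sq] at h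
      have hone : ((-1 : F[X]) ^ n) * (-1 : F[X]) ^ n = 1 := by
        rw [← pow_add]
        exact Even.neg_one_pow ⟨n, rfl⟩
      have hBdvd : (-1 : F[X]) ^ n * P.comp (-X) ∣ Q.comp (X ^ 2) :=
        dvd_trans ⟨(-1 : F[X]) ^ n, by rw [mul_right_comm, hone, one_mul]⟩ hPcdvd
      have hndvd : ¬ P ∣ (-1 : F[X]) ^ n * P.comp (-X) := by
        intro hd
        exact hPB (monic_eq_of_dvd' hm hBm hd (by rw [hBdeg, hdeg]))
      have hcop : IsCoprime P ((-1 : F[X]) ^ n * P.comp (-X)) :=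
        (hirr.coprime_iff_not_dvd).mpr hndvd
      have hmul : P * ((-1 : F[X]) ^ n * P.comp (-X)) ∣ Q.comp (X ^ 2) :=
        hcop.mul_dvd hPQ2 hBdvd
      have hQ2ne : Q.comp (X ^ 2) ≠ 0 := (hQmonic.comp (monic_X_pow 2) hX2deg).ne_zero
      have hdegle := natDegree_le_of_dvd hmul hQ2ne
      rw [natDegree_mul hm.ne_zero hBm.ne_zero, hdeg, hBdeg, natDegree_comp,
        natDegree_X_pow] at hdegle
      have hQdeg : Q.natDegree = n := by omega
      have hAQ : Q = A := monic_eq_of_dvd' hQmonic hAmonic hQA (by rw [hA, hQdeg])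
      rw [← hAQ]
      exact minpoly.irreducible hint
end

section
/- Let q be odd, n ≥ 1, C(X) a monic irreducible polynomial of degree n over F_q with a root β ∈ F_{q^n}, and let A(X) be the degree-n polynomial with C(X)·(-1)^n C(-X) = A(X^2). If A(X) ≠ X is irreducible, then A(X) is the minimal polynomial of β^2 over F_q, and ord(A(X)) = ord(C(X)) / gcd(2, ord(C(X))). -/
open Polynomial

theorem stmt_13 (F E : Type*) [Field F] [Fintype F] [Field E] [Fintype E] [Algebra F E]
    (hq : Odd (Fintype.card F)) (n : ℕ) (hn : 1 ≤ n) (hrank : Module.finrank F E = n)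
    (P : F[X]) (hm : P.Monic) (hirr : Irreducible P) (hdeg : P.natDegree = n)
    (β : E) (hβ : Polynomial.aeval β P = 0)
    (A : F[X]) (hA : A.natDegree = n)
    (hcomp : P * ((-1 : F[X]) ^ n * P.comp (-X)) = A.comp (X ^ 2))
    (hAX : A ≠ X) (hAirr : Irreducible A) :
    A = minpoly F (β ^ 2) ∧
    orderOf (β ^ 2) = orderOf β / Nat.gcd 2 (orderOf β) := by
  have h2 : aeval (β ^ 2) A = 0 := by
    have h := congrArg (aeval β) hcomp
    simp [aeval_comp, hβ] at h
    simpa using h.symm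
  have hAm : A.Monic := by
    have h := congrArg leadingCoeff hcomp
    rw [leadingCoeff_comp (by simp : (X ^ 2 : F[X]).natDegree ≠ 0), leadingCoeff_mul,
      leadingCoeff_mul, leadingCoeff_comp (by simp : (-X : F[X]).natDegree ≠ 0)] at h
    simp [hm.leadingCoeff] at h
    have h1 : A.leadingCoeff = 1 := by
      rw [h.symm, hdeg, ← pow_add]
      exact Even.neg_one_pow ⟨n, rfl⟩
    exact h1
  refine ⟨minpoly.eq_of_irreducible_of_monic hAirr h2 hAm, ?_⟩
  rw [orderOf_pow' β (two_ne_zero), Nat.gcd_comm]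
end
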